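/- arXiv:1903.11147 — 4 statements merged into one kernel-verified Lean document; each statement's English description precedes it below -/
import Mathlib

section
/- For all nonnegative integers a, b and every integer c, the following identity of rational numbers holds: C(2a, a+c) · C(2b, b+c) = ((2a)!(2b)!/(a+b)!) · Σ_l 1/((a−l)!(b−l)!(l+c)!(l−c)!), where the (finite) sum ranges over all integers l with |c| ≤ l ≤ min(a,b) (the sum is empty, and both sides vanish, when |c| > min(a,b)). -/
/-- Binomial coefficient `C(n, j)` for `n : ℕ` and `j : ℤ`, with the convention that
it is zero unless `0 ≤ j ≤ n`, as a rational number. -/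
def ichoose (n : ℕ) (j : ℤ) : ℚ := if 0 ≤ j then (n.choose j.toNat : ℚ) else 0

/-!
Both sides are invariant under `c ↦ -c`, so let `c ≥ 0`; if `c ≤ min a b` write `a = c + p`,
`b = c + q` and `l = c + k`. Dividing Vandermonde's convolution
`C(m + p + q, p) = ∑ₖ C(q, k) C(m + p, p - k)` by `q! (m + p)!` gives its factorial form
`∑ₖ 1 / ((p - k)! (q - k)! (m + k)! k!) = (m + p + q)! / (p! q! (m + p)! (m + q)!)`,
and the theorem is this identity for `m = 2c`, multiplied by `(m + 2p)! (m + 2q)! / (m + p + q)!`.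
-/

open Finset Nat

theorem add_choose_eq_sum_range_min (m p q : ℕ) :
    (q + (m + p)).choose p =
      ∑ k ∈ range (min p q + 1), q.choose k * (m + p).choose (p - k) := by
  rw [Nat.add_choose_eq,
    Nat.sum_antidiagonal_eq_sum_range_succ (fun i j ↦ q.choose i * (m + p).choose j)]
  refine (sum_subset (range_subset_range.2 (by omega)) fun k hk hkq ↦ ?_).symm
  rw [mem_range] at hk hkq
  rw [Nat.choose_eq_zero_of_lt (by omega : q < k), zero_mul]

theorem sum_inv_factorial_eq (m p q : ℕ) :
    ∑ k ∈ range (min p q + 1), 1 / ((p - k)! * (q - k)! * (m + k)! * k ! : ℚ) =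
      (m + p + q)! / (p ! * q ! * (m + p)! * (m + q)! : ℚ) := by
  calc ∑ k ∈ range (min p q + 1), 1 / ((p - k)! * (q - k)! * (m + k)! * k ! : ℚ)
      = ∑ k ∈ range (min p q + 1),
          (q.choose k * (m + p).choose (p - k) : ℚ) / (q ! * (m + p)!) := by
        refine sum_congr rfl fun k hk ↦ ?_
        rw [mem_range] at hk
        rw [Nat.cast_choose ℚ (by omega : k ≤ q),
          Nat.cast_choose ℚ (by omega : p - k ≤ m + p),
          show m + p - (p - k) = m + k by omega]
        field_simp
    _ = ((q + (m + p)).choose p : ℚ) / (q ! * (m + p)!) := by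
        rw [← sum_div, add_choose_eq_sum_range_min]; push_cast; rfl
    _ = (m + p + q)! / (p ! * q ! * (m + p)! * (m + q)! : ℚ) := by
        rw [Nat.cast_choose ℚ (by omega : p ≤ q + (m + p)),
          show q + (m + p) - p = m + q by omega,
          show q + (m + p) = m + p + q by omega]
        field_simp

theorem choose_mul_choose_eq_sum (m p q : ℕ) :
    ((m + 2 * p).choose (m + p) * (m + 2 * q).choose (m + q) : ℚ) =
      (m + 2 * p)! * (m + 2 * q)! / (m + p + q)! *
        ∑ k ∈ range (min p q + 1), 1 / ((p - k)! * (q - k)! * (m + k)! * k ! : ℚ) := by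
  rw [sum_inv_factorial_eq, Nat.cast_choose ℚ (by omega : m + p ≤ m + 2 * p),
    Nat.cast_choose ℚ (by omega : m + q ≤ m + 2 * q), show m + 2 * p - (m + p) = p by omega,
    show m + 2 * q - (m + q) = q by omega]
  field_simp

theorem ichoose_natCast (n k : ℕ) : ichoose n k = n.choose k := by
  simp [ichoose]

theorem ichoose_eq_zero_of_lt {n : ℕ} {j : ℤ} (h : (n : ℤ) < j) : ichoose n j = 0 := by
  rw [ichoose, if_pos (by omega), Nat.choose_eq_zero_of_lt (by omega), Nat.cast_zero]

theorem ichoose_symm (n : ℕ) (j : ℤ) : ichoose n (n - j) = ichoose n j := by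
  rcases lt_or_ge j 0 with hj | hj
  · rw [ichoose_eq_zero_of_lt (by omega), ichoose, if_neg (by omega)]
  rcases lt_or_ge (n : ℤ) j with hjn | hjn
  · rw [ichoose_eq_zero_of_lt hjn, ichoose, if_neg (by omega)]
  obtain ⟨k, rfl⟩ := Int.eq_ofNat_of_zero_le hj
  rw [show (n : ℤ) - k = ((n - k : ℕ) : ℤ) by omega, ichoose_natCast, ichoose_natCast,
    Nat.choose_symm (by omega)]

theorem ichoose_two_mul_add_neg (n : ℕ) (c : ℤ) :
    ichoose (2 * n) (n + -c) = ichoose (2 * n) (n + c) := by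
  rw [← ichoose_symm]; congr 1; push_cast; ring

theorem sum_Icc_int_eq_sum_range {M : Type*} [AddCommMonoid M] (f : ℤ → M) (n : ℤ) (m : ℕ) :
    ∑ l ∈ Icc n (n + m), f l = ∑ k ∈ range (m + 1), f (n + k) := by
  refine sum_nbij' (fun l ↦ (l - n).toNat) (fun k ↦ n + k) (fun l hl ↦ ?_) (fun k hk ↦ ?_)
    (fun l hl ↦ ?_) (fun k hk ↦ ?_) fun l hl ↦ congrArg f ?_ <;>
    simp only [mem_Icc, mem_range] at * <;> omega

theorem sum_Icc_toNat_inv_factorial_eq (n p q : ℕ) :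
    ∑ l ∈ Icc |(n : ℤ)| (min ((n + p : ℕ) : ℤ) ((n + q : ℕ) : ℤ)),
      1 / ((((n + p : ℕ) - l).toNat ! * (((n + q : ℕ) : ℤ) - l).toNat ! *
        (l + n).toNat ! * (l - n).toNat ! : ℕ) : ℚ) =
      ∑ k ∈ range (min p q + 1), 1 / ((p - k)! * (q - k)! * (2 * n + k)! * k ! : ℚ) := by
  rw [abs_of_nonneg n.cast_nonneg,
    show min ((n + p : ℕ) : ℤ) ((n + q : ℕ) : ℤ) = n + (min p q : ℕ) by omega,
    sum_Icc_int_eq_sum_range]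
  refine sum_congr rfl fun k hk ↦ ?_
  rw [mem_range] at hk
  rw [show ((n + p : ℕ) - (n + k : ℤ)).toNat = p - k by omega,
    show (((n + q : ℕ) : ℤ) - (n + k)).toNat = q - k by omega,
    show ((n : ℤ) + k + n).toNat = 2 * n + k by omega,
    show ((n : ℤ) + k - n).toNat = k by omega]
  push_cast; rfl

/-- Chu–Vandermonde, in the practical form of Corollary 2.2:
`C(2a, a+c) · C(2b, b+c) = ((2a)!(2b)!/(a+b)!) · Σ_l 1/((a−l)!(b−l)!(l+c)!(l−c)!)`,
the sum ranging over integers `l` with `|c| ≤ l ≤ min(a, b)`. -/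
theorem stmt0 (a b : ℕ) (c : ℤ) :
    ichoose (2 * a) ((a : ℤ) + c) * ichoose (2 * b) ((b : ℤ) + c) =
      (((2 * a).factorial * (2 * b).factorial : ℕ) : ℚ) / ((a + b).factorial : ℚ) *
        ∑ l ∈ Finset.Icc |c| (min (a : ℤ) (b : ℤ)),
          1 / ((((a : ℤ) - l).toNat.factorial * ((b : ℤ) - l).toNat.factorial *
                (l + c).toNat.factorial * (l - c).toNat.factorial : ℕ) : ℚ) := by
  wlog hc : 0 ≤ c generalizing c
  · rw [← ichoose_two_mul_add_neg a, ← ichoose_two_mul_add_neg b, this (-c) (by omega),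
      abs_neg]
    congr 1
    refine sum_congr rfl fun l _ ↦ ?_
    rw [sub_neg_eq_add, ← sub_eq_add_neg, mul_right_comm _ (l - c).toNat !]
  obtain ⟨n, rfl⟩ := Int.eq_ofNat_of_zero_le hc
  rcases lt_or_ge (min a b) n with hlt | hle
  · rw [abs_of_nonneg hc, Icc_eq_empty (by omega), sum_empty, mul_zero]
    rcases min_lt_iff.1 hlt with h | h
    · rw [ichoose_eq_zero_of_lt (by omega), zero_mul]
    · rw [ichoose_eq_zero_of_lt (by omega : ((2 * b : ℕ) : ℤ) < b + n), mul_zero]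
  obtain ⟨p, rfl⟩ := Nat.exists_eq_add_of_le (le_min_iff.1 hle).1
  obtain ⟨q, rfl⟩ := Nat.exists_eq_add_of_le (le_min_iff.1 hle).2
  rw [sum_Icc_toNat_inv_factorial_eq,
    show ((n + p : ℕ) : ℤ) + n = ((2 * n + p : ℕ) : ℤ) by push_cast; ring,
    show ((n + q : ℕ) : ℤ) + n = ((2 * n + q : ℕ) : ℤ) by push_cast; ring,
    ichoose_natCast, ichoose_natCast, show n + p + (n + q) = 2 * n + p + q by ring,
    show 2 * (n + p) = 2 * n + 2 * p by ring, show 2 * (n + q) = 2 * n + 2 * q by ring,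
    choose_mul_choose_eq_sum]
  push_cast; rfl
end

section
/- For every integer m ≥ 2 and all nonnegative integers a₁, …, a_m, one has Υ_m(a₁, …, a_m) > 0. -/
/-- `Υ_{m+1}(a₀, …, a_m) = Σ_{k ∈ ℤ} (−1)^k ∏ᵢ C(2aᵢ, aᵢ + k)`.  Only integers `k`
with `|k| ≤ a₀` can contribute (the factor `i = 0` vanishes otherwise), so the sum
over all of `ℤ` equals the finite sum over `|k| ≤ a₀`. -/
noncomputable def ups {m : ℕ} (a : Fin (m + 1) → ℕ) : ℚ :=
  ∑ k ∈ Finset.Icc (-(a 0 : ℤ)) (a 0 : ℤ),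
    (-1 : ℚ) ^ k * ∏ i, ichoose (2 * a i) ((a i : ℤ) + k)

/-!
Write `C_a(k) = C(2a, a+k)`. The product `C_a(k) C_b(k)` is a combination
`∑_{c ≤ min a b} N(a,b,c) C_c(k)` whose coefficients
`N(a,b,c) = (2a)! (2b)! / ((a+b)! (a-c)! (b-c)! (2c)!)` are positive and do not depend on `k`;
after clearing factorials this is Vandermonde's identity. Applied to the first two arguments,
it writes `Υ_{m+1}` as a positive combination of values of `Υ_m`, and `Υ_1(c) = [c = 0]` is the
alternating sum of a row of Pascal's triangle. Hence `Υ_m ≥ 0` for all `m`, and for `m ≥ 2`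
the `c = 0` term alone contributes `N(a₁,a₂,0) ∏_{i ≥ 3} C(2aᵢ, aᵢ) > 0`.
-/

open Finset
open scoped Nat

noncomputable def centeredChoose (a : ℕ) (k : ℤ) : ℚ := ichoose (2 * a) (a + k)

theorem centeredChoose_eq_choose_natAbs (a : ℕ) (k : ℤ) :
    centeredChoose a k = (2 * a).choose (a + k.natAbs) := by
  unfold centeredChoose ichoose
  split_ifs with h
  · rcases le_or_gt 0 k with hk | hk
    · congr 2; omega
    · rw [← Nat.choose_symm (by omega)]
      congr 2; omega
  · rw [Nat.choose_eq_zero_of_lt (by omega), Nat.cast_zero]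

theorem centeredChoose_eq_zero {a : ℕ} {k : ℤ} (h : a < k.natAbs) : centeredChoose a k = 0 := by
  rw [centeredChoose_eq_choose_natAbs, Nat.choose_eq_zero_of_lt (by omega), Nat.cast_zero]

theorem sum_Icc_neg_eq_sum_Icc_neg {M : Type*} [AddCommMonoid M] {f : ℤ → M} {A B : ℕ}
    (hBA : B ≤ A) (hf : ∀ k : ℤ, B < k.natAbs → f k = 0) :
    ∑ k ∈ Icc (-(A : ℤ)) A, f k = ∑ k ∈ Icc (-(B : ℤ)) B, f k := by
  refine (sum_subset (Icc_subset_Icc (by omega) (by omega)) fun k hkA hkB => hf k ?_).symm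
  simp only [mem_Icc] at hkA hkB
  omega

theorem centeredChoose_natCast_sub (c j : ℕ) :
    centeredChoose c (j - c) = (2 * c).choose j := by
  simp [centeredChoose, ichoose]

theorem sum_Icc_neg_one_zpow_mul_centeredChoose (c : ℕ) :
    ∑ k ∈ Icc (-(c : ℤ)) c, (-1 : ℚ) ^ k * centeredChoose c k = if c = 0 then 1 else 0 := by
  have shift : ∑ k ∈ Icc (-(c : ℤ)) c, (-1 : ℚ) ^ k * centeredChoose c k =
      ∑ j ∈ range (2 * c + 1), (-1 : ℚ) ^ ((j : ℤ) - c) * centeredChoose c (j - c) :=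
    sum_nbij' (fun k => (k + c).toNat) (fun j => (j : ℤ) - c)
      (fun k hk => by rw [mem_Icc] at hk; rw [mem_range]; omega)
      (fun j hj => by rw [mem_range] at hj; rw [mem_Icc]; omega)
      (fun k hk => by rw [mem_Icc] at hk; omega) (fun j _ => by omega)
      (fun k hk => by rw [mem_Icc] at hk; rw [show ((k + c).toNat : ℤ) - c = k by omega])
  have term (j : ℕ) :
      (-1 : ℚ) ^ ((j : ℤ) - c) * centeredChoose c (j - c) =
        (-1) ^ c * (((-1) ^ j * (2 * c).choose j : ℤ) : ℚ) := by
    rw [centeredChoose_natCast_sub, zpow_sub₀ (by norm_num),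
      zpow_natCast, zpow_natCast, div_eq_mul_inv, ← inv_pow, inv_neg_one]
    push_cast
    ring
  rw [shift, sum_congr rfl fun j _ => term j, ← mul_sum, ← Int.cast_sum,
    Int.alternating_sum_range_choose]
  rcases c with _ | c <;> simp

theorem Nat.sum_range_min_choose_sub_mul_choose (m s t : ℕ) :
    ∑ j ∈ range (min s t + 1), m.choose (s - j) * t.choose j = (m + t).choose s := by
  have extend : ∑ j ∈ range (min s t + 1), m.choose (s - j) * t.choose j =
      ∑ j ∈ range (s + 1), m.choose (s - j) * t.choose j := by
    refine sum_subset (range_subset_range.2 (by omega)) fun j hjs hjt => ?_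
    rw [mem_range] at hjs hjt
    rw [Nat.choose_eq_zero_of_lt (show t < j by omega), mul_zero]
  rw [extend, add_comm m, Nat.add_choose_eq,
    Nat.sum_antidiagonal_eq_sum_range_succ fun i j => t.choose i * m.choose j]
  exact sum_congr rfl fun j _ => mul_comm _ _

noncomputable def linCoeff (a b c : ℕ) : ℚ :=
  (2 * a)! * (2 * b)! / ((a + b)! * (a - c)! * (b - c)! * (2 * c)!)

theorem linCoeff_pos (a b c : ℕ) : 0 < linCoeff a b c := by
  unfold linCoeff; positivity

theorem linCoeff_mul_choose {n p q j : ℕ} (hp : j ≤ p) (hq : j ≤ q) :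
    linCoeff (n + p) (n + q) (n + j) * (2 * (n + j)).choose (n + j + n) =
      (2 * (n + p))! * (2 * (n + q))! / ((n + p + (n + q))! * (2 * n + p)! * q !) *
        ((2 * n + p).choose (p - j) * q.choose j : ℕ) := by
  obtain ⟨u, rfl⟩ := Nat.exists_eq_add_of_le hp
  obtain ⟨v, rfl⟩ := Nat.exists_eq_add_of_le hq
  have hsymm : (2 * (n + j)).choose (n + j + n) = (2 * (n + j)).choose j := by
    rw [← Nat.choose_symm (by omega)]; congr 1; omega
  rw [hsymm, Nat.add_sub_cancel_left]
  unfold linCoeff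
  rw [show n + (j + u) - (n + j) = u by omega, show n + (j + v) - (n + j) = v by omega]
  push_cast
  rw [Nat.cast_choose ℚ (by omega : j ≤ 2 * (n + j)),
    Nat.cast_choose ℚ (by omega : u ≤ 2 * n + (j + u)),
    Nat.cast_choose ℚ (by omega : j ≤ j + v)]
  rw [show 2 * (n + j) - j = 2 * n + j by omega, show 2 * n + (j + u) - u = 2 * n + j by omega,
    Nat.add_sub_cancel_left]
  field_simp

theorem cast_choose_mul_choose_eq_sum_linCoeff (a b n : ℕ) :
    ((2 * a).choose (a + n) * (2 * b).choose (b + n) : ℚ) =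
      ∑ c ∈ range (min a b + 1), linCoeff a b c * (2 * c).choose (c + n) := by
  by_cases hn : min a b < n
  · rw [sum_eq_zero fun c hc => by
      rw [Nat.choose_eq_zero_of_lt (by rw [mem_range] at hc; omega), Nat.cast_zero, mul_zero]]
    rcases min_lt_iff.1 hn with ha | hb
    · rw [Nat.choose_eq_zero_of_lt (by omega : 2 * a < a + n), Nat.cast_zero, zero_mul]
    · rw [Nat.choose_eq_zero_of_lt (by omega : 2 * b < b + n), Nat.cast_zero, mul_zero]
  obtain ⟨p, rfl⟩ := Nat.exists_eq_add_of_le (le_of_not_gt hn |>.trans (min_le_left a b))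
  obtain ⟨q, rfl⟩ := Nat.exists_eq_add_of_le (le_of_not_gt hn |>.trans (min_le_right _ b))
  have below_n : ∑ c ∈ range n, linCoeff (n + p) (n + q) c * (2 * c).choose (c + n) = 0 :=
    sum_eq_zero fun c hc => by
      rw [Nat.choose_eq_zero_of_lt (by rw [mem_range] at hc; omega), Nat.cast_zero, mul_zero]
  rw [min_add_add_left, add_assoc n (min p q), sum_range_add, below_n, zero_add,
    sum_congr rfl fun j hj => linCoeff_mul_choose (n := n) (p := p) (q := q) (j := j)
      (by rw [mem_range] at hj; omega) (by rw [mem_range] at hj; omega),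
    ← mul_sum, ← Nat.cast_sum, Nat.sum_range_min_choose_sub_mul_choose]
  rw [Nat.cast_choose ℚ (by omega : n + p + n ≤ 2 * (n + p)),
    Nat.cast_choose ℚ (by omega : n + q + n ≤ 2 * (n + q)),
    Nat.cast_choose ℚ (by omega : p ≤ 2 * n + p + q)]
  rw [show 2 * (n + p) - (n + p + n) = p by omega, show 2 * (n + q) - (n + q + n) = q by omega,
    show 2 * n + p + q - p = 2 * n + q by omega, show 2 * n + p + q = n + p + (n + q) by omega,
    show n + p + n = 2 * n + p by omega, show n + q + n = 2 * n + q by omega]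
  field_simp

theorem centeredChoose_mul_centeredChoose (a b : ℕ) (k : ℤ) :
    centeredChoose a k * centeredChoose b k =
      ∑ c ∈ range (min a b + 1), linCoeff a b c * centeredChoose c k := by
  simp only [centeredChoose_eq_choose_natAbs]
  exact cast_choose_mul_choose_eq_sum_linCoeff a b k.natAbs

/-- The window `A` stays fixed through the recursion `altSum_eq_sum_linCoeff_mul`;
`a 0 ≤ A` is enough for it to contain every nonzero term. -/
noncomputable def altSum {n : ℕ} (A : ℕ) (a : Fin n → ℕ) : ℚ :=
  ∑ k ∈ Icc (-(A : ℤ)) A, (-1 : ℚ) ^ k * ∏ i, centeredChoose (a i) k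

theorem ups_eq_altSum {m : ℕ} (a : Fin (m + 1) → ℕ) : ups a = altSum (a 0) a := rfl

theorem altSum_eq_sum_linCoeff_mul {r : ℕ} (A : ℕ) (a : Fin (r + 2) → ℕ) :
    altSum A a = ∑ c ∈ range (min (a 0) (a 1) + 1),
      linCoeff (a 0) (a 1) c * altSum A (Fin.cons c (Fin.tail (Fin.tail a))) := by
  simp only [altSum, mul_sum]
  rw [sum_comm]
  refine sum_congr rfl fun k _ => ?_
  rw [Fin.prod_univ_succ, Fin.prod_univ_succ, Fin.succ_zero_eq_one,
    ← mul_assoc (centeredChoose (a 0) k), centeredChoose_mul_centeredChoose, sum_mul, mul_sum]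
  refine sum_congr rfl fun c _ => ?_
  rw [Fin.prod_univ_succ]
  simp only [Fin.cons_zero, Fin.cons_succ, Fin.tail]
  ring

theorem altSum_fin_one (a : Fin 1 → ℕ) {A : ℕ} (hA : a 0 ≤ A) :
    altSum A a = if a 0 = 0 then 1 else 0 := by
  rw [altSum, sum_Icc_neg_eq_sum_Icc_neg hA fun k hk => by
    rw [Fin.prod_univ_one, centeredChoose_eq_zero hk, mul_zero]]
  simp only [Fin.prod_univ_one, sum_Icc_neg_one_zpow_mul_centeredChoose]

theorem altSum_nonneg {r : ℕ} (a : Fin (r + 1) → ℕ) {A : ℕ} (hA : a 0 ≤ A) :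
    0 ≤ altSum A a := by
  induction r with
  | zero =>
    rw [altSum_fin_one a hA]
    split_ifs <;> norm_num
  | succ r ih =>
    rw [altSum_eq_sum_linCoeff_mul]
    exact sum_nonneg fun c hc => mul_nonneg (linCoeff_pos _ _ _).le
      (ih _ (by rw [mem_range] at hc; simp only [Fin.cons_zero]; omega))

theorem altSum_cons_zero {r : ℕ} (A : ℕ) (v : Fin r → ℕ) :
    altSum A (Fin.cons 0 v) = ∏ i, ((v i).centralBinom : ℚ) := by
  rw [altSum, sum_Icc_neg_eq_sum_Icc_neg (Nat.zero_le A) fun k hk => by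
    rw [Fin.prod_univ_succ, Fin.cons_zero, centeredChoose_eq_zero hk, zero_mul, mul_zero]]
  simp [Fin.prod_univ_succ, centeredChoose_eq_choose_natAbs, Nat.centralBinom_eq_two_mul_choose]

/-- For every `m ≥ 2` (here the arity is `m + 2`) and all nonnegative integers
`a₀, …, a_{m+1}`, one has `Υ_{m+2}(a₀, …, a_{m+1}) > 0`. -/
theorem stmt5 (m : ℕ) (a : Fin (m + 2) → ℕ) : 0 < ups a := by
  set term := fun c =>
    linCoeff (a 0) (a 1) c * altSum (a 0) (Fin.cons c (Fin.tail (Fin.tail a)))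
  have term_zero_pos : 0 < term 0 := by
    refine mul_pos (linCoeff_pos _ _ _) ?_
    rw [altSum_cons_zero]
    exact prod_pos fun i _ => mod_cast Nat.centralBinom_pos _
  have term_nonneg : ∀ c ∈ range (min (a 0) (a 1) + 1), 0 ≤ term c := fun c hc =>
    mul_nonneg (linCoeff_pos _ _ _).le
      (altSum_nonneg _ (by rw [mem_range] at hc; simp only [Fin.cons_zero]; omega))
  rw [ups_eq_altSum, altSum_eq_sum_linCoeff_mul]
  exact term_zero_pos.trans_le (single_le_sum term_nonneg (by simp))
end

section
/- For all integers p, q with 1 ≤ q ≤ p, one has N_{2p, 2q+1} = (−1)^{p+q} · ((2p)!)^{2q+1} / (∏_{ν=0}^{2q} (2(p−q+ν))!) · Υ_{2q+1}(p−q, p−q+1, …, p+q), as an identity of rational numbers. -/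
/-- `N_{k,r} = Σ_{j=0}^{k−r+1} (−1)^{rj} C(k,j) C(k,j+1) ⋯ C(k,j+r−1)`. -/
def Nkr (k r : ℕ) : ℤ :=
  ∑ j ∈ Finset.range (k - r + 2),
    (-1 : ℤ) ^ (r * j) * ∏ ν ∈ Finset.range r, (k.choose (j + ν) : ℤ)

/-!
Both sides are alternating sums over the same range of `j`, and they agree term by term:
writing every binomial coefficient as a quotient of factorials, the factors `(j + ν)!` are
common to `∏_ν C(2p, j + ν)` and `∏_ν C(2(p - q + ν), j + ν)`, and the remaining factorials
`∏_ν (2p - j - ν)!` and `∏_ν (2(p - q) + ν - j)!` coincide after reversing the order of `ν`.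
The signs match because `(-1)^{(2q+1) j} = (-1)^j` and the shift `k = t - (p - q)` in `Υ`
contributes `(-1)^{p-q} = (-1)^{p+q}`.
-/

open Finset Nat

theorem prod_choose_mul_prod_factorial_mul_prod_factorial {ι : Type*} (s : Finset ι)
    (n k : ι → ℕ) (hk : ∀ i ∈ s, k i ≤ n i) :
    (∏ i ∈ s, (n i).choose (k i)) * (∏ i ∈ s, (k i)!) * ∏ i ∈ s, (n i - k i)! =
      ∏ i ∈ s, (n i)! := by
  rw [← prod_mul_distrib, ← prod_mul_distrib]
  exact prod_congr rfl fun i hi => choose_mul_factorial_mul_factorial (hk i hi)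

theorem prod_choose_consecutive_mul_prod_factorial (a r t : ℕ) :
    (∏ ν ∈ range (r + 1), (a + r).choose (t + ν)) * ∏ ν ∈ range (r + 1), (a + 2 * ν)! =
      (a + r)! ^ (r + 1) * ∏ ν ∈ range (r + 1), (a + 2 * ν).choose (t + ν) := by
  by_cases hta : a < t
  · have hleft : ∏ ν ∈ range (r + 1), (a + r).choose (t + ν) = 0 :=
      prod_eq_zero (self_mem_range_succ r) (choose_eq_zero_of_lt (by omega))
    have hright : ∏ ν ∈ range (r + 1), (a + 2 * ν).choose (t + ν) = 0 :=
      prod_eq_zero (mem_range.2 r.succ_pos) (choose_eq_zero_of_lt (by omega))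
    rw [hleft, hright, zero_mul, mul_zero]
  have hreflect : ∏ ν ∈ range (r + 1), (a + r - (t + ν))! =
      ∏ ν ∈ range (r + 1), (a + 2 * ν - (t + ν))! := by
    rw [← prod_range_reflect]
    refine prod_congr rfl fun ν hν => ?_
    rw [mem_range] at hν
    congr 1
    omega
  have hpos : 0 < (∏ ν ∈ range (r + 1), (t + ν)!) * ∏ ν ∈ range (r + 1), (a + r - (t + ν))! := by
    positivity
  refine Nat.eq_of_mul_eq_mul_right hpos ?_
  calc _ = ((∏ ν ∈ range (r + 1), (a + r).choose (t + ν)) * (∏ ν ∈ range (r + 1), (t + ν)!) *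
          ∏ ν ∈ range (r + 1), (a + r - (t + ν))!) * ∏ ν ∈ range (r + 1), (a + 2 * ν)! := by ring
    _ = (a + r)! ^ (r + 1) * ((∏ ν ∈ range (r + 1), (a + 2 * ν).choose (t + ν)) *
          (∏ ν ∈ range (r + 1), (t + ν)!) * ∏ ν ∈ range (r + 1), (a + 2 * ν - (t + ν))!) := by
      rw [prod_choose_mul_prod_factorial_mul_prod_factorial,
        prod_choose_mul_prod_factorial_mul_prod_factorial, prod_const, card_range]
      all_goals intro ν hν; rw [mem_range] at hν; omega
    _ = _ := by rw [hreflect]; ring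

theorem Nkr_succ (k r : ℕ) :
    Nkr k (r + 1) = ∑ j ∈ range (k - r + 1),
      (-1) ^ ((r + 1) * j) * ∏ ν ∈ range (r + 1), (k.choose (j + ν) : ℤ) := by
  refine eventually_constant_sum (fun j hj => ?_) (by omega)
  rw [prod_eq_zero (self_mem_range_succ r) (by rw [choose_eq_zero_of_lt (by omega)]; rfl),
    mul_zero]

theorem ups_consecutive (b m : ℕ) :
    ups (fun ν : Fin (m + 1) => b + ν) = (-1) ^ b * ∑ t ∈ range (2 * b + 1),
      (-1) ^ t * ∏ ν ∈ range (m + 1), ((2 * (b + ν)).choose (t + ν) : ℚ) := by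
  rw [ups, mul_sum]
  symm
  refine sum_nbij' (fun t : ℕ => (t : ℤ) - b) (fun k => (k + b).toNat) ?_ ?_ ?_ ?_ ?_
  · intro t ht; simp at ht ⊢; omega
  · intro k hk; simp at hk ⊢; omega
  · intro t ht; simp
  · intro k hk; simp at hk ⊢; omega
  · intro t ht
    rw [← Fin.prod_univ_eq_prod_range, zpow_sub₀ (by norm_num), zpow_natCast, zpow_natCast]
    have harg (i : Fin (m + 1)) : ((b + i : ℕ) : ℤ) + (t - b) = ((t + i : ℕ) : ℤ) := by
      push_cast; ring
    simp only [harg, ichoose_natCast, div_eq_mul_inv, ← inv_pow, inv_neg, inv_one]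
    ring

theorem stmt6_general (p q : ℕ) (hqp : q ≤ p) :
    (Nkr (2 * p) (2 * q + 1) : ℚ) =
      (-1 : ℚ) ^ (p + q) * ((2 * p).factorial : ℚ) ^ (2 * q + 1) /
          (∏ ν ∈ Finset.range (2 * q + 1), ((2 * (p - q + ν)).factorial : ℚ)) *
        ups (fun ν : Fin (2 * q + 1) => p - q + (ν : ℕ)) := by
  have hsign : (-1 : ℚ) ^ (p + q) * (-1) ^ (p - q) = 1 := by
    rw [← pow_add, show p + q + (p - q) = 2 * p by omega, pow_mul, neg_one_sq, one_pow]
  have hD : (∏ ν ∈ range (2 * q + 1), ((2 * (p - q + ν))! : ℚ)) ≠ 0 := by positivity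
  rw [Nkr_succ, ups_consecutive, show 2 * p - 2 * q = 2 * (p - q) by omega, div_mul_eq_mul_div,
    eq_div_iff hD]
  push_cast
  rw [sum_mul, mul_sum, mul_sum]
  refine sum_congr rfl fun j _ => ?_
  have hkey := prod_choose_consecutive_mul_prod_factorial (2 * (p - q)) (2 * q) j
  simp only [← mul_add, Nat.sub_add_cancel hqp] at hkey
  replace hkey := congrArg (Nat.cast : ℕ → ℚ) hkey
  push_cast at hkey
  rw [pow_mul, (odd_two_mul_add_one q).neg_one_pow]
  linear_combination (-1 : ℚ) ^ j * hkey - (-1 : ℚ) ^ j * ((2 * p)! : ℚ) ^ (2 * q + 1) *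
    (∏ ν ∈ range (2 * q + 1), ((2 * (p - q + ν)).choose (j + ν) : ℚ)) * hsign

/-- For all integers `p, q` with `1 ≤ q ≤ p`,
`N_{2p, 2q+1} = (−1)^{p+q} · ((2p)!)^{2q+1} / (∏_{ν=0}^{2q} (2(p−q+ν))!)
  · Υ_{2q+1}(p−q, p−q+1, …, p+q)`. -/
theorem stmt6 (p q : ℕ) (hq : 1 ≤ q) (hqp : q ≤ p) :
    (Nkr (2 * p) (2 * q + 1) : ℚ) =
      (-1 : ℚ) ^ (p + q) * ((2 * p).factorial : ℚ) ^ (2 * q + 1) /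
          (∏ ν ∈ Finset.range (2 * q + 1), ((2 * (p - q + ν)).factorial : ℚ)) *
        ups (fun ν : Fin (2 * q + 1) => p - q + (ν : ℕ)) :=
  stmt6_general p q hqp
end

section
/- For every even integer k ≥ 2 and every integer r with 2 ≤ r ≤ k+1, one has N_{k,r} ≠ 0. (For r even, N_{k,r} is a sum of positive terms, hence positive; for r odd it is a nonzero alternating sum.) -/
open Finset Polynomial
open scoped ComplexOrder

noncomputable def fourierSum (ω : ℂ) (W : Finset ℤ) (u : ℤ → ℂ) (l : ℤ) : ℂ :=
  ∑ t ∈ W, u t * ω ^ (l * t)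

namespace IsPrimitiveRoot

variable {ω : ℂ} {M : ℕ}

theorem sum_range_zpow_mul (hω : IsPrimitiveRoot ω M) (n : ℤ) :
    ∑ l ∈ range M, ω ^ ((l : ℤ) * n) = if (M : ℤ) ∣ n then (M : ℂ) else 0 := by
  have hpow : ∀ l : ℕ, ω ^ ((l : ℤ) * n) = (ω ^ n) ^ l := fun l => by
    rw [mul_comm, zpow_mul, zpow_natCast]
  simp_rw [hpow]
  split_ifs with hn
  · simp [(hω.zpow_eq_one_iff_dvd n).mpr hn]
  · have hne : ω ^ n ≠ 1 := mt (hω.zpow_eq_one_iff_dvd n).mp hn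
    have hM : (ω ^ n) ^ M = 1 := by
      rw [← zpow_natCast, ← zpow_mul, mul_comm, zpow_mul, hω.zpow_eq_one, one_zpow]
    rw [geom_sum_eq hne, hM, sub_self, zero_div]

theorem sum_fourierSum_mul_fourierSum (hω : IsPrimitiveRoot ω M) {W : Finset ℤ}
    (hW : ∀ a ∈ W, ∀ b ∈ W, (M : ℤ) ∣ a - b → a = b) (u v : ℤ → ℂ) (s : ℤ) :
    ∑ l ∈ range M, fourierSum ω W u l * fourierSum ω W v (s - l) =
      M * fourierSum ω W (u * v) s := by
  rcases M.eq_zero_or_pos with rfl | hM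
  · simp
  have h0 : ω ≠ 0 := hω.ne_zero hM.ne'
  calc ∑ l ∈ range M, fourierSum ω W u l * fourierSum ω W v (s - l)
      = ∑ a ∈ W, ∑ b ∈ W, u a * v b * ω ^ (s * b) * ∑ l ∈ range M, ω ^ ((l : ℤ) * (a - b)) := by
        simp_rw [fourierSum, sum_mul_sum, mul_sum]
        rw [sum_comm]
        refine sum_congr rfl fun a _ => ?_
        rw [sum_comm]
        refine sum_congr rfl fun b _ => sum_congr rfl fun l _ => ?_
        rw [mul_mul_mul_comm, ← zpow_add₀ h0,
          show (l : ℤ) * a + (s - l) * b = s * b + l * (a - b) by ring, zpow_add₀ h0]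
        ring
    _ = ∑ a ∈ W, M * (u a * v a * ω ^ (s * a)) := by
        refine sum_congr rfl fun a ha => ?_
        have hdiff : ∀ b ∈ W, ((M : ℤ) ∣ a - b ↔ b = a) := fun b hb =>
          ⟨fun h => (hW a ha b hb h).symm, fun h => by simp [h]⟩
        simp_rw [hω.sum_range_zpow_mul]
        rw [sum_congr rfl fun b hb => by rw [if_congr (hdiff b hb) rfl rfl]]
        simp [ha, mul_comm]
    _ = M * fourierSum ω W (u * v) s := by
        simp [fourierSum, mul_sum]

theorem fourierSum_mul_pos (hω : IsPrimitiveRoot ω M) (hM : 0 < M) {W : Finset ℤ}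
    (hW : ∀ a ∈ W, ∀ b ∈ W, (M : ℤ) ∣ a - b → a = b) {u v : ℤ → ℂ}
    (hu : ∀ l, 0 ≤ fourierSum ω W u l) (hu₀ : 0 < fourierSum ω W u 0)
    (hv : ∀ l, 0 < fourierSum ω W v l) (s : ℤ) : 0 < fourierSum ω W (u * v) s := by
  have hsum : 0 < ∑ l ∈ range M, fourierSum ω W u l * fourierSum ω W v (s - l) :=
    sum_pos' (fun l _ => mul_nonneg (hu l) (hv _).le)
      ⟨0, mem_range.mpr hM, by simpa using mul_pos hu₀ (hv s)⟩
  rw [hω.sum_fourierSum_mul_fourierSum hW] at hsum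
  exact pos_of_mul_pos_right hsum (by positivity)

end IsPrimitiveRoot

theorem Int.eq_of_mem_Icc_of_dvd_sub {M : ℕ} {c d : ℤ} (hM : d - c < M) :
    ∀ a ∈ Icc c d, ∀ b ∈ Icc c d, (M : ℤ) ∣ a - b → a = b := by
  intro a ha b hb h
  rw [mem_Icc] at ha hb
  exact sub_eq_zero.mp (Int.eq_zero_of_abs_lt_dvd h (abs_lt.mpr ⟨by omega, by omega⟩))

theorem fourierSum_eq_sum_range {W : Finset ℤ} {n : ℕ} (hW : Icc (-(n : ℤ)) n ⊆ W) {u : ℤ → ℂ}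
    (hlo : ∀ t < -(n : ℤ), u t = 0) (hhi : ∀ t > (n : ℤ), u t = 0) (ω : ℂ) (l : ℤ) :
    fourierSum ω W u l = ∑ i ∈ range (2 * n + 1), u (i - n) * ω ^ (l * (i - n)) := by
  have hu : ∀ t ∉ Icc (-(n : ℤ)) n, u t = 0 := fun t ht => by
    rw [mem_Icc, not_and_or, not_le, not_le] at ht
    exact ht.elim (hlo t) (hhi t)
  rw [fourierSum, ← sum_subset hW fun t _ ht => by rw [hu t ht, zero_mul], Int.Icc_eq_finset_map,
    sum_map, show (n + 1 - -n : ℤ).toNat = 2 * n + 1 by omega]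
  refine sum_congr rfl fun i _ => ?_
  simp [neg_add_eq_sub]

theorem sq_zpow_mul_sub_eq_pow_mul_inv_pow {ζ : ℂ} (hζ : ζ ≠ 0) (l : ℤ) {n i : ℕ}
    (hi : i ≤ 2 * n) : (ζ ^ 2) ^ (l * (i - n)) = (ζ ^ l) ^ i * (ζ ^ l)⁻¹ ^ (2 * n - i) := by
  simp only [← zpow_natCast, ← zpow_mul, inv_zpow', ← zpow_add₀ hζ]
  congr 1
  push_cast [hi]
  ring

theorem coeff_one_add_X_sq_pow (R : Type*) [CommSemiring R] (n e : ℕ) :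
    ((1 + X ^ 2 : R[X]) ^ n).coeff e = if 2 ∣ e then (n.choose (e / 2) : R) else 0 := by
  rw [show (1 + X ^ 2 : R[X]) ^ n = expand R 2 ((1 + X) ^ n) by simp, coeff_expand two_pos,
    coeff_one_add_X_pow]

theorem coeff_one_add_C_mul_X_pow {R : Type*} [CommSemiring R] (y : R) (n i : ℕ) :
    ((1 + C y * X) ^ n).coeff i = n.choose i * y ^ i := by
  rw [show (1 + C y * X : R[X]) ^ n = ((1 + X) ^ n).comp (C y * X) by simp, comp_C_mul_X_coeff,
    coeff_one_add_X_pow, mul_comm]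

theorem one_add_C_mul_X_mul_one_add_C_inv_mul_X {F : Type*} [Field F] {y : F} (hy : y ≠ 0) :
    (1 + C y * X) * (1 + C y⁻¹ * X) = 1 + C (y + y⁻¹) * X + X ^ 2 := by
  have h : C y * C y⁻¹ = 1 := by rw [← C_mul, mul_inv_cancel₀ hy, C_1]
  rw [C_add]
  linear_combination X ^ 2 * h

/-- Only even powers of `γ` contribute to an even coefficient, so no cancellation can occur. -/
theorem coeff_one_add_C_mul_X_add_X_sq_pow_pos (γ : ℝ) {n j : ℕ} (hj : j ≤ n) :
    0 < ((1 + C γ * X + X ^ 2) ^ n).coeff (2 * j) := by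
  have hterm : ∀ i, ((C γ * X) ^ i * (1 + X ^ 2) ^ (n - i) * (n.choose i : ℝ[X])).coeff (2 * j) =
      γ ^ i * n.choose i *
        if i ≤ 2 * j then (if 2 ∣ 2 * j - i then ((n - i).choose ((2 * j - i) / 2) : ℝ) else 0)
        else 0 := fun i => by
    rw [mul_pow, ← C_pow, ← C_eq_natCast, mul_comm, ← mul_assoc, ← mul_assoc, ← C_mul, mul_assoc,
      coeff_C_mul, coeff_X_pow_mul', coeff_one_add_X_sq_pow, mul_comm (n.choose i : ℝ)]
  rw [add_right_comm, add_comm, add_pow, finsetSum_coeff]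
  simp_rw [hterm]
  refine sum_pos' (fun i _ => ?_) ⟨0, by simp, by simpa using Nat.choose_pos hj⟩
  split_ifs with h₁ h₂
  · have hi : Even i := by
      obtain ⟨c, hc⟩ := h₂
      exact ⟨j - c, by omega⟩
    have := hi.pow_nonneg γ
    positivity
  · simp
  · simp

def binomRow (n : ℕ) (x : ℤ) : ℂ := if 0 ≤ x then (n.choose x.toNat : ℂ) else 0

namespace binomRow

variable {n : ℕ} {x : ℤ}

@[simp]
theorem natCast (n i : ℕ) : binomRow n i = n.choose i := by simp [binomRow]

theorem of_neg (hx : x < 0) : binomRow n x = 0 := if_neg hx.not_ge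

theorem of_lt (hx : n < x) : binomRow n x = 0 := by
  rw [binomRow, if_pos (by omega), Nat.choose_eq_zero_of_lt (by omega), Nat.cast_zero]

theorem symm (n : ℕ) (x : ℤ) : binomRow n (n - x) = binomRow n x := by
  rcases lt_or_ge x 0 with hx | hx
  · rw [of_lt (by omega), of_neg hx]
  rcases lt_or_ge (n : ℤ) x with hxn | hxn
  · rw [of_neg (by omega), of_lt hxn]
  lift x to ℕ using hx
  rw [show (n : ℤ) - x = ((n - x : ℕ) : ℤ) by omega, natCast, natCast,
    Nat.choose_symm (by omega)]

end binomRow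

/-- The term of `N_{2K, 2q+1}` of index `j = t + K - q`. -/
def binomWindow (K q : ℕ) (t : ℤ) : ℂ :=
  ∏ ν ∈ range (2 * q + 1), binomRow (2 * K) (K - q + t + ν)

def binomPair (K d : ℕ) (t : ℤ) : ℂ :=
  binomRow (2 * K) (K + t + d) * binomRow (2 * K) (K + t - d)

theorem binomWindow_succ (K q : ℕ) :
    binomWindow K (q + 1) = binomWindow K q * binomPair K (q + 1) := by
  ext t
  simp only [binomWindow, binomPair, Pi.mul_apply]
  rw [show 2 * (q + 1) + 1 = 2 * q + 1 + 1 + 1 by ring, prod_range_succ, prod_range_succ']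
  push_cast
  ring_nf

theorem Nkr_pos_of_even {k r : ℕ} (hr : Even r) (hrk : r ≤ k + 1) : 0 < Nkr k r := by
  refine sum_pos' (fun j _ => ?_) ⟨0, mem_range.mpr (by omega), ?_⟩ <;>
    rw [(hr.mul_right _).neg_one_pow, one_mul]
  · positivity
  · exact prod_pos fun ν hν => by exact_mod_cast Nat.choose_pos (by rw [mem_range] at hν; omega)

/-- `Nkr k r` sums over `k - r + 2` indices in truncated subtraction, one too many when
`r = k + 1`; the extra term vanishes. -/
theorem Nkr_odd_eq_sum (m q : ℕ) :
    Nkr (2 * (m + q)) (2 * q + 1) = ∑ j ∈ range (2 * m + 1),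
      (-1) ^ j * ∏ ν ∈ range (2 * q + 1), ((2 * (m + q)).choose (j + ν) : ℤ) := by
  rw [Nkr, ← sum_subset (range_subset_range.mpr
    (show 2 * m + 1 ≤ 2 * (m + q) - (2 * q + 1) + 2 by omega)) fun j _ hj => ?_]
  · refine sum_congr rfl fun j _ => ?_
    rw [pow_mul, (odd_two_mul_add_one q).neg_one_pow]
  · rw [mem_range, not_lt] at hj
    rw [prod_eq_zero (i := 2 * q) (by simp)
      (by rw [Nat.choose_eq_zero_of_lt (by omega), Nat.cast_zero]), mul_zero]

section

variable {K : ℕ} {ζ : ℂ}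

/- `ζ` will be a primitive root of unity of order `2M`, `M = 4K + 2`: then `ω = ζ²` has order `M`,
the window `[-2K, 2K]` injects into `ℤ/M`, `ζ^l + ζ^-l = 2 cos (π l / M)` and `ω^(M/2) = -1`. -/
local notation "𝓕" => fourierSum (ζ ^ 2) (Icc (-(2 * K : ℤ)) (2 * K))

theorem fourierSum_binomWindow_zero (hζ : ζ ≠ 0) (l : ℤ) :
    𝓕 (binomWindow K 0) l = (ζ ^ l + (ζ ^ l)⁻¹) ^ (2 * K) := by
  rw [fourierSum_eq_sum_range (n := K) (Icc_subset_Icc (by omega) (by omega)), add_pow]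
  · refine sum_congr rfl fun i hi => ?_
    rw [sq_zpow_mul_sub_eq_pow_mul_inv_pow hζ l (by rw [mem_range] at hi; omega)]
    simp [binomWindow, mul_comm]
  · exact fun t ht => by simpa [binomWindow] using binomRow.of_neg (by omega)
  · exact fun t ht => by simpa [binomWindow] using binomRow.of_lt (by omega)

theorem fourierSum_binomPair (hζ : ζ ≠ 0) {d : ℕ} (hd : d ≤ K) (l : ℤ) :
    𝓕 (binomPair K d) l =
      ((1 + C (ζ ^ l) * X) ^ (2 * K) * (1 + C (ζ ^ l)⁻¹ * X) ^ (2 * K)).coeff (2 * (K + d)) := by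
  rw [fourierSum_eq_sum_range (n := K + d) (Icc_subset_Icc (by omega) (by omega)), coeff_mul,
    Nat.sum_antidiagonal_eq_sum_range_succ_mk]
  · refine sum_congr rfl fun i hi => ?_
    rw [mem_range] at hi
    rw [coeff_one_add_C_mul_X_pow, coeff_one_add_C_mul_X_pow,
      sq_zpow_mul_sub_eq_pow_mul_inv_pow hζ l (by omega)]
    have h₁ : binomRow (2 * K) (K + (i - (K + d : ℕ)) + d) = (2 * K).choose i := by
      rw [← binomRow.natCast]
      congr 1
      push_cast
      ring
    have h₂ : binomRow (2 * K) (K + (i - (K + d : ℕ)) - d) = (2 * K).choose (2 * (K + d) - i) := by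
      rw [← binomRow.symm, ← binomRow.natCast]
      congr 1
      push_cast
      omega
    simp only [binomPair, h₁, h₂]
    ring
  · exact fun t ht => by rw [binomPair, binomRow.of_neg (by omega), zero_mul]
  · exact fun t ht => by rw [binomPair, binomRow.of_lt (by push_cast; omega), zero_mul]

theorem fourierSum_binomWindow_zero_nonneg (hζ : ‖ζ‖ = 1) (l : ℤ) :
    0 ≤ 𝓕 (binomWindow K 0) l := by
  have hy : ‖ζ ^ l‖ = 1 := by rw [norm_zpow, hζ, one_zpow]
  rw [fourierSum_binomWindow_zero (norm_ne_zero_iff.mp (by simp [hζ])), Complex.inv_eq_conj hy,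
    Complex.add_conj, ← Complex.ofReal_pow]
  exact Complex.zero_le_real.mpr ((even_two_mul K).pow_nonneg _)

theorem fourierSum_binomWindow_zero_zero_pos (hζ : ζ ≠ 0) : 0 < 𝓕 (binomWindow K 0) 0 := by
  rw [fourierSum_binomWindow_zero hζ]
  norm_num

theorem fourierSum_binomPair_pos (hζ : ‖ζ‖ = 1) {d : ℕ} (hd : d ≤ K) (l : ℤ) :
    0 < 𝓕 (binomPair K d) l := by
  have hy : ‖ζ ^ l‖ = 1 := by rw [norm_zpow, hζ, one_zpow]
  rw [fourierSum_binomPair (norm_ne_zero_iff.mp (by simp [hζ])) hd, ← mul_pow,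
    one_add_C_mul_X_mul_one_add_C_inv_mul_X (norm_ne_zero_iff.mp (by simp [hy])),
    Complex.inv_eq_conj hy, Complex.add_conj]
  have hmap : (1 + C ((2 * (ζ ^ l).re : ℝ) : ℂ) * X + X ^ 2) ^ (2 * K) =
      ((1 + C (2 * (ζ ^ l).re) * X + X ^ 2) ^ (2 * K)).map Complex.ofRealHom := by
    simp
  rw [hmap, coeff_map]
  exact Complex.zero_lt_real.mpr (coeff_one_add_C_mul_X_add_X_sq_pow_pos _ (by omega))

theorem fourierSum_binomWindow_succ_pos (hζ : IsPrimitiveRoot ζ (2 * (4 * K + 2))) {q : ℕ}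
    (hq : q + 1 ≤ K) (hg : ∀ l, 0 ≤ 𝓕 (binomWindow K q) l) (hg₀ : 0 < 𝓕 (binomWindow K q) 0)
    (s : ℤ) : 0 < 𝓕 (binomWindow K (q + 1)) s := by
  rw [binomWindow_succ]
  exact (hζ.pow (by omega) rfl).fourierSum_mul_pos (by omega)
    (Int.eq_of_mem_Icc_of_dvd_sub (by push_cast; omega)) hg hg₀
    (fourierSum_binomPair_pos (hζ.norm'_eq_one (by omega)) hq) s

theorem fourierSum_binomWindow_nonneg (hζ : IsPrimitiveRoot ζ (2 * (4 * K + 2))) {q : ℕ}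
    (hq : q ≤ K) : (∀ l, 0 ≤ 𝓕 (binomWindow K q) l) ∧ 0 < 𝓕 (binomWindow K q) 0 := by
  induction q with
  | zero =>
    exact ⟨fourierSum_binomWindow_zero_nonneg (hζ.norm'_eq_one (by omega)),
      fourierSum_binomWindow_zero_zero_pos (hζ.ne_zero (by omega))⟩
  | succ q ih =>
    obtain ⟨hg, hg₀⟩ := ih (by omega)
    have hpos := fourierSum_binomWindow_succ_pos hζ hq hg hg₀
    exact ⟨fun l => (hpos l).le, hpos 0⟩

theorem fourierSum_binomWindow_half (hζ : IsPrimitiveRoot ζ (2 * (4 * K + 2))) {q : ℕ}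
    (hq : q ≤ K) :
    𝓕 (binomWindow K q) (2 * K + 1) = (-1) ^ (K - q) * Nkr (2 * K) (2 * q + 1) := by
  obtain ⟨m, rfl⟩ : ∃ m, K = m + q := ⟨K - q, by omega⟩
  have hhalf : ζ ^ (4 * (m + q) + 2) = -1 :=
    (hζ.pow (by positivity) (mul_comm 2 (4 * (m + q) + 2))).eq_neg_one_of_two_right
  rw [fourierSum_eq_sum_range (n := m) (Icc_subset_Icc (by omega) (by omega)), Nkr_odd_eq_sum,
    Nat.add_sub_cancel]
  · push_cast
    rw [mul_sum]
    refine sum_congr rfl fun i _ => ?_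
    have hsign : (ζ ^ 2) ^ ((2 * (m + q) + 1 : ℤ) * (i - m)) = (-1) ^ m * (-1) ^ i := by
      rw [← zpow_natCast ζ 2, ← zpow_mul, show ((2 : ℕ) : ℤ) * ((2 * (m + q) + 1) * (i - m)) =
        ((4 * (m + q) + 2 : ℕ) : ℤ) * (i - m) by push_cast; ring, zpow_mul, zpow_natCast, hhalf,
        zpow_sub₀ (by norm_num), zpow_natCast, zpow_natCast]
      rcases neg_one_pow_eq_or ℂ m with h | h <;> rw [h] <;> ring
    have hwindow : binomWindow (m + q) q (i - m) =
        ∏ ν ∈ range (2 * q + 1), ((2 * (m + q)).choose (i + ν) : ℂ) := by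
      refine prod_congr rfl fun ν _ => ?_
      rw [← binomRow.natCast]
      congr 1
      push_cast
      ring
    rw [hsign, hwindow]
    ring
  · exact fun t ht => prod_eq_zero (i := 0) (by simp) (binomRow.of_neg (by push_cast; omega))
  · exact fun t ht => prod_eq_zero (i := 2 * q) (by simp) (binomRow.of_lt (by push_cast; omega))

end

theorem neg_one_pow_mul_Nkr_pos {K q : ℕ} (hq : 1 ≤ q) (hqK : q ≤ K) :
    0 < (-1) ^ (K - q) * Nkr (2 * K) (2 * q + 1) := by
  obtain ⟨ζ, hζ⟩ : ∃ ζ : ℂ, IsPrimitiveRoot ζ (2 * (4 * K + 2)) :=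
    ⟨_, Complex.isPrimitiveRoot_exp _ (by omega)⟩
  obtain ⟨p, rfl⟩ : ∃ p, q = p + 1 := ⟨q - 1, by omega⟩
  obtain ⟨hg, hg₀⟩ := fourierSum_binomWindow_nonneg hζ (q := p) (by omega)
  have hpos := fourierSum_binomWindow_succ_pos hζ hqK hg hg₀ (2 * K + 1)
  rw [fourierSum_binomWindow_half hζ hqK] at hpos
  exact_mod_cast hpos

theorem stmt8_general (k r : ℕ) (hke : Even k) (hr : 2 ≤ r) (hrk : r ≤ k + 1) :
    Nkr k r ≠ 0 := by
  rcases Nat.even_or_odd r with hre | ⟨q, rfl⟩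
  · exact (Nkr_pos_of_even hre hrk).ne'
  · obtain ⟨K, rfl⟩ := hke
    rw [← two_mul]
    exact right_ne_zero_of_mul (neg_one_pow_mul_Nkr_pos (by omega) (by omega)).ne'

/-- For every even integer `k ≥ 2` and every integer `r` with `2 ≤ r ≤ k + 1`,
one has `N_{k,r} ≠ 0`. -/
theorem stmt8 (k r : ℕ) (hk : 2 ≤ k) (hke : Even k) (hr : 2 ≤ r) (hrk : r ≤ k + 1) :
    Nkr k r ≠ 0 :=
  stmt8_general k r hke hr hrk
end
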